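/- Let S be a finite nonempty index set and let H be an arbitrary map from data families (û_j, v̂_j)_{j∈S} ∈ (ℝ×ℝ)^S to real-valued functions on ℝ. For data U = (ū_j, v̄_j)_{j∈S} with u_max := max_{j∈S} ū_j strictly greater than u_min := min_{j∈S} ū_j, set u_ave = (1/|S|)·Σ_{j∈S} ū_j and R = u_max − u_min, define the dimensionless transformation D(U) = ((ū_j − u_ave)/R, v̄_j/R)_{j∈S}, and define the dimensionless reconstruction operator H_D by H_D(U)(x) = R·H(D(U))(x) + u_ave. Then H_D is scale-invariant: for every λ > 0 and every c ∈ ℝ, the data U′ = (λū_j + c, λv̄_j)_{j∈S} satisfies H_D(U′)(x) = λ·H_D(U)(x) + c for all x ∈ ℝ. -/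

import Mathlib

variable {S : Type*} [Fintype S] [Nonempty S]

/-- `u_max`: the maximum of the cell averages over the stencil. -/
noncomputable def uMax (U : S → ℝ × ℝ) : ℝ :=
  Finset.univ.sup' Finset.univ_nonempty fun j => (U j).1

/-- `u_min`: the minimum of the cell averages over the stencil. -/
noncomputable def uMin (U : S → ℝ × ℝ) : ℝ :=
  Finset.univ.inf' Finset.univ_nonempty fun j => (U j).1

/-- `u_ave`: the average of the cell averages over the stencil. -/
noncomputable def uAve (U : S → ℝ × ℝ) : ℝ :=
  (1 / (Fintype.card S : ℝ)) * ∑ j, (U j).1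

/-- The dimensionless transformation `D` normalizing the stencil data:
`D(U)_j = ((ū_j - u_ave)/R, v̄_j/R)` with `R = u_max - u_min`. -/
noncomputable def Dtrans (U : S → ℝ × ℝ) : S → ℝ × ℝ := fun j =>
  (((U j).1 - uAve U) / (uMax U - uMin U), (U j).2 / (uMax U - uMin U))

/-- The dimensionless reconstruction operator `H_D = D_u⁻¹ ∘ H ∘ D`:
`H_D(U)(x) = R · H(D(U))(x) + u_ave` with `R = u_max - u_min`. -/
noncomputable def HD (H : (S → ℝ × ℝ) → ℝ → ℝ) (U : S → ℝ × ℝ) : ℝ → ℝ := fun x =>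
  (uMax U - uMin U) * H (Dtrans U) x + uAve U

/-- **Theorem 2.6 of the paper (scale invariance of the dimensionless reconstruction
operator)**: for any reconstruction operator `H`, the dimensionless operator `H_D` is
scale-invariant: for every `λ > 0` and `c ∈ ℝ`, applying `H_D` to the affinely
transformed data `(λū_j + c, λv̄_j)` yields `λ·H_D(U)(x) + c` (assuming the stencil
data are non-constant, i.e. `u_max > u_min`). -/

lemma uMax_affine (U : S → ℝ × ℝ) (lam c : ℝ) (hlam : 0 < lam) :
    uMax (fun j => (lam * (U j).1 + c, lam * (U j).2)) = lam * uMax U + c := by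
  unfold uMax
  rw [Finset.comp_sup'_eq_sup'_comp (g := fun t => lam * t + c)]
  · rfl
  · intro x y
    show lam * max x y + c = max (lam * x + c) (lam * y + c)
    rw [max_add_add_right, ← mul_max_of_nonneg _ _ hlam.le]

lemma uMin_affine (U : S → ℝ × ℝ) (lam c : ℝ) (hlam : 0 < lam) :
    uMin (fun j => (lam * (U j).1 + c, lam * (U j).2)) = lam * uMin U + c := by
  unfold uMin
  rw [Finset.apply_inf'_eq_inf'_comp (g := fun t => lam * t + c)]
  · rfl
  · intro x y
    show lam * min x y + c = min (lam * x + c) (lam * y + c)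
    rw [min_add_add_right, ← mul_min_of_nonneg _ _ hlam.le]

lemma uAve_affine (U : S → ℝ × ℝ) (lam c : ℝ) :
    uAve (fun j => (lam * (U j).1 + c, lam * (U j).2)) = lam * uAve U + c := by
  unfold uAve
  have hcard : (Fintype.card S : ℝ) ≠ 0 := by
    exact_mod_cast Fintype.card_ne_zero
  simp only [Finset.sum_add_distrib, ← Finset.mul_sum, Finset.sum_const,
    Finset.card_univ, nsmul_eq_mul]
  field_simp

lemma Dtrans_affine (U : S → ℝ × ℝ) (lam c : ℝ) (hlam : 0 < lam)
    (hrange : uMin U < uMax U) :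
    Dtrans (fun j => (lam * (U j).1 + c, lam * (U j).2)) = Dtrans U := by
  funext j
  unfold Dtrans
  rw [uMax_affine U lam c hlam, uMin_affine U lam c hlam, uAve_affine U lam c]
  have hR : uMax U - uMin U ≠ 0 := sub_ne_zero.mpr hrange.ne'
  have hl : lam ≠ 0 := hlam.ne'
  have key : lam * uMax U + c - (lam * uMin U + c) = lam * (uMax U - uMin U) := by ring
  simp only [Prod.mk.injEq, key]
  constructor
  · rw [show lam * (U j).1 + c - (lam * uAve U + c) = lam * ((U j).1 - uAve U) by ring,
      mul_div_mul_left _ _ hl]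
  · rw [mul_div_mul_left _ _ hl]

theorem HD_scale_invariant
    (H : (S → ℝ × ℝ) → ℝ → ℝ) (U : S → ℝ × ℝ)
    (hrange : uMin U < uMax U) :
    ∀ (lam c : ℝ), 0 < lam → ∀ x : ℝ,
      HD H (fun j => (lam * (U j).1 + c, lam * (U j).2)) x = lam * HD H U x + c := by
  intro lam c hlam x
  unfold HD
  rw [uMax_affine U lam c hlam, uMin_affine U lam c hlam, uAve_affine U lam c,
    Dtrans_affine U lam c hlam hrange]
  ring
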